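/- arXiv:2003.04044 — 5 statements merged into one kernel-verified Lean document; each statement's English description precedes it below -/
import Mathlib

section
/- For every natural number k ≥ 1 and real t > 0, c > 0, the integral ∫₀^{ct} (c²t² − β²)^{k−1}(ct − β) dβ equals ((ct)^{2k}/2)·(Γ(k)Γ(1/2)/Γ(k+1/2) − 1/k). -/
/-! Substituting `β = c t x` reduces the integral to `(c t)^(2k)` times
`∫₀¹ (1 - x²)^(k-1) (1 - x) dx`. The part `∫₀¹ x (1 - x²)^(k-1) dx = 1/(2k)` has an elementary
antiderivative, and `J n = ∫₀¹ (1 - x²)^n dx` satisfies `(2n + 3) J (n + 1) = (2n + 2) J n`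
(differentiate `x (1 - x²)^(n+1)`), the same recursion as `Γ(n + 1) Γ(1/2) / (2 Γ(n + 3/2))`. -/

open Real intervalIntegral

lemma integral_one_sub_sq_pow_succ (n : ℕ) :
    ∫ x in (0:ℝ)..1, (1 - x ^ 2) ^ (n + 1) =
      (2 * (n : ℝ) + 2) / (2 * n + 3) * ∫ x in (0:ℝ)..1, (1 - x ^ 2) ^ n := by
  have hderiv : ∀ x : ℝ, HasDerivAt (fun x : ℝ => x * (1 - x ^ 2) ^ (n + 1))
      ((2 * n + 3) * (1 - x ^ 2) ^ (n + 1) - (2 * n + 2) * (1 - x ^ 2) ^ n) x := by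
    intro x
    refine ((hasDerivAt_id' x).fun_mul
      (((hasDerivAt_pow 2 x).const_sub 1).fun_pow (n + 1))).congr_deriv ?_
    simp only [Nat.add_sub_cancel, pow_succ]
    push_cast
    ring
  have hzero : ∫ x in (0:ℝ)..1,
      ((2 * n + 3) * (1 - x ^ 2) ^ (n + 1) - (2 * n + 2) * (1 - x ^ 2) ^ n) = 0 := by
    rw [integral_eq_sub_of_hasDerivAt (fun x _ => hderiv x)
      (Continuous.intervalIntegrable (by fun_prop) _ _)]
    norm_num
  rw [integral_sub (Continuous.intervalIntegrable (by fun_prop) _ _)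
      (Continuous.intervalIntegrable (by fun_prop) _ _),
    integral_const_mul, integral_const_mul, sub_eq_zero] at hzero
  field_simp
  linarith

lemma integral_one_sub_sq_pow (n : ℕ) :
    ∫ x in (0:ℝ)..1, (1 - x ^ 2) ^ n =
      Gamma (n + 1) * Gamma (1 / 2) / (2 * Gamma (n + 1 + 1 / 2)) := by
  induction n with
  | zero =>
    rw [Nat.cast_zero, zero_add, add_comm, Gamma_add_one one_half_pos.ne']
    simp only [pow_zero, integral_one, Gamma_one]
    field_simp
    norm_num
  | succ n ih =>
    rw [integral_one_sub_sq_pow_succ, ih]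
    push_cast
    rw [Gamma_add_one (by positivity : (n : ℝ) + 1 ≠ 0),
      show (n : ℝ) + 1 + 1 + 1 / 2 = n + 1 + 1 / 2 + 1 by ring,
      Gamma_add_one (by positivity : (n : ℝ) + 1 + 1 / 2 ≠ 0)]
    field_simp
    ring

lemma integral_mul_one_sub_sq_pow (n : ℕ) :
    ∫ x in (0:ℝ)..1, x * (1 - x ^ 2) ^ n = 1 / (2 * ((n : ℝ) + 1)) := by
  have hderiv : ∀ x : ℝ, HasDerivAt (fun x : ℝ => -(1 - x ^ 2) ^ (n + 1) / (2 * (n + 1)))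
      (x * (1 - x ^ 2) ^ n) x := by
    intro x
    refine ((((hasDerivAt_pow 2 x).const_sub 1).fun_pow (n + 1)).fun_neg.div_const
      (2 * (n + 1 : ℝ))).congr_deriv ?_
    simp only [Nat.add_sub_cancel]
    push_cast
    field_simp
  rw [integral_eq_sub_of_hasDerivAt (fun x _ => hderiv x)
    (Continuous.intervalIntegrable (by fun_prop) _ _)]
  norm_num
  field_simp

lemma integral_sq_sub_sq_pow_mul_sub (a : ℝ) (n : ℕ) :
    ∫ β in (0:ℝ)..a, (a ^ 2 - β ^ 2) ^ n * (a - β) =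
      a ^ (2 * n + 2) * ∫ x in (0:ℝ)..1, (1 - x ^ 2) ^ n * (1 - x) := by
  have hscale := smul_integral_comp_mul_left (fun β : ℝ => (a ^ 2 - β ^ 2) ^ n * (a - β)) a
    (a := 0) (b := 1)
  simp only [mul_zero, mul_one, smul_eq_mul] at hscale
  rw [← hscale, ← integral_const_mul, ← integral_const_mul]
  congr 1
  ext x
  rw [show a ^ 2 - (a * x) ^ 2 = a ^ 2 * (1 - x ^ 2) by ring, mul_pow, ← pow_mul]
  ring

theorem stmt_0_general (k : ℕ) (hk : 1 ≤ k) (c t : ℝ) :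
    ∫ β in (0:ℝ)..(c * t), (c ^ 2 * t ^ 2 - β ^ 2) ^ (k - 1) * (c * t - β) =
      (c * t) ^ (2 * k) / 2 *
        (Real.Gamma k * Real.Gamma (1 / 2) / Real.Gamma (k + 1 / 2) - 1 / k) := by
  obtain ⟨n, rfl⟩ : ∃ n, k = n + 1 := ⟨k - 1, by omega⟩
  have hsplit : ∫ x in (0:ℝ)..1, (1 - x ^ 2) ^ n * (1 - x) =
      (∫ x in (0:ℝ)..1, (1 - x ^ 2) ^ n) - ∫ x in (0:ℝ)..1, x * (1 - x ^ 2) ^ n := by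
    rw [← integral_sub (Continuous.intervalIntegrable (by fun_prop) _ _)
      (Continuous.intervalIntegrable (by fun_prop) _ _)]
    congr 1
    ext x
    ring
  rw [show c ^ 2 * t ^ 2 = (c * t) ^ 2 by ring, Nat.add_sub_cancel,
    integral_sq_sub_sq_pow_mul_sub, hsplit, integral_one_sub_sq_pow, integral_mul_one_sub_sq_pow]
  push_cast
  field_simp
  ring

theorem stmt_0 (k : ℕ) (hk : 1 ≤ k) (c t : ℝ) (ht : 0 < t) (hc : 0 < c) :
    ∫ β in (0:ℝ)..(c * t), (c ^ 2 * t ^ 2 - β ^ 2) ^ (k - 1) * (c * t - β) =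
      (c * t) ^ (2 * k) / 2 *
        (Real.Gamma k * Real.Gamma (1 / 2) / Real.Gamma (k + 1 / 2) - 1 / k) :=
  stmt_0_general k hk c t
end

section
/- For every natural number k ≥ 0 and reals c, t, β with 0 < β < ct, ∫₀^β (c²t² − x²)^k dx = β·(2ct)^{2k}·(k!)²/(2k+1)! · Σ_{j=0}^{k} C(2j,j)·((c²t² − β²)/(2ct)²)^j. -/
/-!
Writing `I_k = ∫₀^β (a² - x²)^k dx`, differentiating `x (a² - x²)^(k+1)` gives the reduction
formula `(2k+3) I_{k+1} = β (a² - β²)^(k+1) + (2k+2) a² I_k`. The claimed closed form satisfies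
the same recursion: passing from `k` to `k+1` multiplies the prefactor `(2a)^(2k) (k!)² / (2k+1)!`
by `(2k+2) a² / (2k+3)`, and the new summand `C(2k+2, k+1) r^(k+1)`, `r = (a² - β²) / (2a)²`,
contributes exactly `β (a² - β²)^(k+1) / (2k+3)` because `C(2n, n) (n!)² = (2n)!`.
-/

open Nat Finset intervalIntegral

theorem integral_sq_sub_sq_pow_succ (a β : ℝ) (m : ℕ) :
    (2 * m + 3) * ∫ x in (0:ℝ)..β, (a ^ 2 - x ^ 2) ^ (m + 1) =
      β * (a ^ 2 - β ^ 2) ^ (m + 1) + (2 * m + 2) * a ^ 2 * ∫ x in (0:ℝ)..β, (a ^ 2 - x ^ 2) ^ m := by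
  have hderiv : ∀ x ∈ Set.uIcc (0:ℝ) β, HasDerivAt (fun x : ℝ => x * (a ^ 2 - x ^ 2) ^ (m + 1))
      ((2 * m + 3) * (a ^ 2 - x ^ 2) ^ (m + 1) - (2 * m + 2) * a ^ 2 * (a ^ 2 - x ^ 2) ^ m) x := by
    intro x _
    have hsub : HasDerivAt (fun x : ℝ => a ^ 2 - x ^ 2) (-(2 * x)) x := by
      simpa using (hasDerivAt_pow 2 x).const_sub (a ^ 2)
    refine ((hasDerivAt_id' x).mul (hsub.pow (m + 1))).congr_deriv ?_
    simp only [Pi.pow_apply, Nat.add_sub_cancel, Nat.cast_add, Nat.cast_one]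
    ring
  have hFTC := integral_eq_sub_of_hasDerivAt hderiv (Continuous.intervalIntegrable (by fun_prop) _ _)
  rw [integral_sub (Continuous.intervalIntegrable (by fun_prop) _ _)
      (Continuous.intervalIntegrable (by fun_prop) _ _),
    integral_const_mul, integral_const_mul] at hFTC
  simp only [zero_mul] at hFTC
  linarith

theorem two_mul_add_one_mul_factorial_sq_div_mul_centralBinom (k : ℕ) :
    (2 * k + 1 : ℝ) * ((k ! : ℝ) ^ 2 / (2 * k + 1)!) * centralBinom k = 1 := by
  have h : (centralBinom k : ℝ) * k ! * k ! = (2 * k)! := by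
    rw [centralBinom_eq_two_mul_choose, two_mul]
    exact_mod_cast add_choose_mul_factorial_mul_factorial k k
  rw [factorial_succ]
  push_cast
  field_simp
  linear_combination h

theorem factorial_sq_div_factorial_two_mul_add_one_succ (k : ℕ) :
    2 * (2 * k + 3 : ℝ) * (((k + 1)! : ℝ) ^ 2 / (2 * (k + 1) + 1)!) =
      (k + 1) * ((k ! : ℝ) ^ 2 / (2 * k + 1)!) := by
  rw [show 2 * (k + 1) + 1 = 2 * k + 1 + 1 + 1 by ring, factorial_succ (2 * k + 1 + 1),
    factorial_succ (2 * k + 1), factorial_succ k]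
  push_cast
  field_simp
  ring

theorem integral_sq_sub_sq_pow (a β : ℝ) (ha : a ≠ 0) (k : ℕ) :
    ∫ x in (0:ℝ)..β, (a ^ 2 - x ^ 2) ^ k =
      β * (2 * a) ^ (2 * k) * (k ! : ℝ) ^ 2 / ((2 * k + 1)! : ℝ) *
        ∑ j ∈ range (k + 1), (centralBinom j : ℝ) * ((a ^ 2 - β ^ 2) / (2 * a) ^ 2) ^ j := by
  induction k with
  | zero => simp
  | succ k ih =>
    rw [sum_range_succ]
    set r := (a ^ 2 - β ^ 2) / (2 * a) ^ 2
    set T := ∑ j ∈ range (k + 1), (centralBinom j : ℝ) * r ^ j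
    have hr : r ^ (k + 1) * (2 * a) ^ (2 * (k + 1)) = (a ^ 2 - β ^ 2) ^ (k + 1) := by
      rw [pow_mul, ← mul_pow, div_mul_cancel₀ _ (by positivity)]
    clear_value r T
    have hpow : (2 * a) ^ (2 * (k + 1)) = (2 * a) ^ 2 * (2 * a) ^ (2 * k) := by ring
    have hbinom := two_mul_add_one_mul_factorial_sq_div_mul_centralBinom (k + 1)
    have hfac := factorial_sq_div_factorial_two_mul_add_one_succ k
    push_cast at hbinom
    refine mul_left_cancel₀ (by positivity : (2 * k + 3 : ℝ) ≠ 0) ?_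
    rw [integral_sq_sub_sq_pow_succ, ih]
    linear_combination -(β * r ^ (k + 1) * (2 * a) ^ (2 * (k + 1))) * hbinom - β * hr -
      ((2 * k + 3) * (((k + 1)! : ℝ) ^ 2 / (2 * (k + 1) + 1)!) * β * T) * hpow -
      (2 * a ^ 2 * β * (2 * a) ^ (2 * k) * T) * hfac

theorem stmt_4 (k : ℕ) (c t β : ℝ) (hβ : 0 < β) (hβct : β < c * t) :
    ∫ x in (0:ℝ)..β, (c ^ 2 * t ^ 2 - x ^ 2) ^ k =
      β * (2 * c * t) ^ (2 * k) * (Nat.factorial k : ℝ) ^ 2 /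
        (Nat.factorial (2 * k + 1) : ℝ) *
        ∑ j ∈ Finset.range (k + 1),
          (Nat.choose (2 * j) j : ℝ) *
            ((c ^ 2 * t ^ 2 - β ^ 2) / (2 * c * t) ^ 2) ^ j := by
  have hct : c * t ≠ 0 := (hβ.trans hβct).ne'
  simpa only [mul_pow, centralBinom_eq_two_mul_choose, mul_assoc] using
    integral_sq_sub_sq_pow (c * t) β hct k
end

section
/- For every natural number k ≥ 0 and reals c, t, β with 0 < β < ct, the function F(β) = (β/(ct))·Σ_{j=0}^{k} C(2j,j)·((c²t² − β²)/(4c²t²))^j satisfies F(ct) = 1, F(0) = 0, and F is monotone increasing on [0, ct]. -/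
open Finset

/-- The function `y ↦ F(c t y)`: the CDF of the statement after rescaling `[0, c t]` to `[0, 1]`. -/
noncomputable def telegraphMaxCDF (k : ℕ) (y : ℝ) : ℝ :=
  y * ∑ j ∈ range (k + 1), ((2 * j).choose j : ℝ) * ((1 - y ^ 2) / 4) ^ j

/-- With `S u = ∑_{j ≤ k} C(2j, j) u^j`, this is `S u + (2u - 1/2) S' u = (2k+1) C(2k, k) u^k`;
it telescopes because `(j+1) C(2j+2, j+1) = 2 (2j+1) C(2j, j)`. -/
lemma sum_choose_mul_pow_add_deriv (k : ℕ) (u : ℝ) :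
    ∑ j ∈ range (k + 1), ((2 * j).choose j : ℝ) * (u ^ j + (2 * u - 1 / 2) * (j * u ^ (j - 1)))
      = (2 * k + 1) * ((2 * k).choose k : ℝ) * u ^ k := by
  induction k with
  | zero => simp
  | succ n ih =>
    rw [sum_range_succ, ih]
    have hrec : ((n : ℝ) + 1) * ((2 * (n + 1)).choose (n + 1) : ℝ)
        = 2 * (2 * n + 1) * ((2 * n).choose n : ℝ) := by
      exact_mod_cast Nat.succ_mul_centralBinom_succ n
    simp only [Nat.add_sub_cancel]
    push_cast
    linear_combination (-(u ^ n) / 2) * hrec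

lemma hasDerivAt_telegraphMaxCDF (k : ℕ) (y : ℝ) :
    HasDerivAt (telegraphMaxCDF k)
      ((2 * k + 1) * ((2 * k).choose k : ℝ) * ((1 - y ^ 2) / 4) ^ k) y := by
  have hv : HasDerivAt (fun y : ℝ => (1 - y ^ 2) / 4) (-(2 * y) / 4) y := by
    simpa using ((hasDerivAt_pow 2 y).const_sub 1).div_const 4
  have hsum := HasDerivAt.fun_sum (u := range (k + 1))
    fun j _ => (hv.fun_pow j).const_mul ((2 * j).choose j : ℝ)
  refine ((hasDerivAt_id' y).mul hsum).congr_deriv ?_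
  rw [← sum_choose_mul_pow_add_deriv, one_mul, mul_sum, ← sum_add_distrib]
  refine sum_congr rfl fun j _ => ?_
  ring

lemma monotoneOn_telegraphMaxCDF (k : ℕ) : MonotoneOn (telegraphMaxCDF k) (Set.Icc (-1) 1) := by
  refine monotoneOn_of_deriv_nonneg (convex_Icc _ _)
    (fun y _ => (hasDerivAt_telegraphMaxCDF k y).continuousAt.continuousWithinAt)
    (fun y _ => (hasDerivAt_telegraphMaxCDF k y).differentiableAt.differentiableWithinAt)
    fun y hy => ?_
  rw [interior_Icc] at hy
  have hv : 0 ≤ (1 - y ^ 2) / 4 := by nlinarith [hy.1, hy.2]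
  rw [(hasDerivAt_telegraphMaxCDF k y).deriv]
  positivity

lemma telegraphMaxCDF_one (k : ℕ) : telegraphMaxCDF k 1 = 1 := by
  simp [telegraphMaxCDF, sum_range_succ']

theorem stmt_5 (k : ℕ) (c t β : ℝ) (hβ : 0 < β) (hβct : β < c * t)
    (F : ℝ → ℝ)
    (hF : ∀ x : ℝ, F x = x / (c * t) *
      ∑ j ∈ Finset.range (k + 1),
        (Nat.choose (2 * j) j : ℝ) *
          ((c ^ 2 * t ^ 2 - x ^ 2) / (4 * c ^ 2 * t ^ 2)) ^ j) :
    F (c * t) = 1 ∧ F 0 = 0 ∧ MonotoneOn F (Set.Icc 0 (c * t)) := by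
  have hct : 0 < c * t := hβ.trans hβct
  have hF' : ∀ x, F x = telegraphMaxCDF k (x / (c * t)) := fun x => by
    have hv : (c ^ 2 * t ^ 2 - x ^ 2) / (4 * c ^ 2 * t ^ 2) = (1 - (x / (c * t)) ^ 2) / 4 := by
      obtain ⟨hc, ht⟩ := mul_ne_zero_iff.1 hct.ne'
      field_simp
    rw [hF, telegraphMaxCDF, hv]
  refine ⟨by rw [hF', div_self hct.ne', telegraphMaxCDF_one], by simp [hF', telegraphMaxCDF], ?_⟩
  intro x hx y hy hxy
  rw [hF', hF']
  have hmaps : ∀ z ∈ Set.Icc 0 (c * t), z / (c * t) ∈ Set.Icc (-1 : ℝ) 1 := fun z hz =>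
    ⟨by linarith [div_nonneg hz.1 hct.le], (div_le_one hct).2 hz.2⟩
  exact monotoneOn_telegraphMaxCDF k (hmaps x hx) (hmaps y hy)
    (div_le_div_of_nonneg_right hxy hct.le)
end

section
/- For every natural number k ≥ 0, every m ≥ 1, and reals c, t with ct > 0, (2(2k+1)!/(k!)²)·∫₀^{ct} β^m·(c²t²−β²)^k/(2ct)^{2k+1} dβ = ((2k+1)!·(ct)^m/(2^{2k+1}·k!))·Γ((m+1)/2)/Γ(k+1+(m+1)/2). -/
/-!
Write `J k = ∫₀^a β^m (a² - β²)^k dβ`. Since `β^(m+1) (a² - β²)^(k+1)` vanishes at `β = 0` and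
`β = a`, integrating its derivative over `[0, a]` gives `(m + 2k + 3) J (k+1) = 2 (k+1) a² J k`.
Since `m + 2k + 3 = 2x` for `x = k + 1 + (m+1)/2`, this matches `Γ (x + 1) = x Γ x`, and
induction from `J 0 = a^(m+1) / (m+1)` gives `J k = a^(m+2k+1) k! Γ((m+1)/2) / (2 Γ(x))`.
-/

open intervalIntegral Real

lemma hasDerivAt_pow_mul_sq_sub_pow (m k : ℕ) (a β : ℝ) :
    HasDerivAt (fun x : ℝ => x ^ (m + 1) * (a ^ 2 - x ^ 2) ^ (k + 1))
      (((m : ℝ) + 2 * k + 3) * (β ^ m * (a ^ 2 - β ^ 2) ^ (k + 1)) -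
        2 * (k + 1) * a ^ 2 * (β ^ m * (a ^ 2 - β ^ 2) ^ k)) β := by
  have hpow : HasDerivAt (fun x : ℝ => x ^ (m + 1)) (((m : ℝ) + 1) * β ^ m) β := by
    simpa using hasDerivAt_pow (m + 1) β
  have hinner : HasDerivAt (fun x : ℝ => a ^ 2 - x ^ 2) (-(2 * β)) β := by
    simpa using (hasDerivAt_pow 2 β).const_sub (a ^ 2)
  have houter : HasDerivAt (fun x : ℝ => (a ^ 2 - x ^ 2) ^ (k + 1))
      (((k : ℝ) + 1) * (a ^ 2 - β ^ 2) ^ k * (-(2 * β))) β := by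
    simpa [Function.comp_def] using (hasDerivAt_pow (k + 1) (a ^ 2 - β ^ 2)).comp β hinner
  have hprod : HasDerivAt (fun x : ℝ => x ^ (m + 1) * (a ^ 2 - x ^ 2) ^ (k + 1)) _ β :=
    hpow.mul houter
  convert hprod using 1
  ring

lemma intervalIntegrable_pow_mul_sq_sub_pow (m k : ℕ) (a : ℝ) :
    IntervalIntegrable (fun β : ℝ => β ^ m * (a ^ 2 - β ^ 2) ^ k) MeasureTheory.volume 0 a :=
  ((continuous_pow m).mul ((continuous_const.sub (continuous_pow 2)).pow k)).intervalIntegrable 0 a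

lemma integral_pow_mul_sq_sub_pow_succ (m k : ℕ) (a : ℝ) :
    ((m : ℝ) + 2 * k + 3) * ∫ β in (0 : ℝ)..a, β ^ m * (a ^ 2 - β ^ 2) ^ (k + 1) =
      2 * (k + 1) * a ^ 2 * ∫ β in (0 : ℝ)..a, β ^ m * (a ^ 2 - β ^ 2) ^ k := by
  have hJ := intervalIntegrable_pow_mul_sq_sub_pow m
  have hboundary := integral_eq_sub_of_hasDerivAt
    (fun β _ => hasDerivAt_pow_mul_sq_sub_pow m k a β)
    (((hJ (k + 1) a).const_mul _).sub ((hJ k a).const_mul _))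
  rw [integral_sub ((hJ (k + 1) a).const_mul _) ((hJ k a).const_mul _),
    integral_const_mul, integral_const_mul] at hboundary
  simp only [sub_self, ne_eq, Nat.add_one_ne_zero, not_false_eq_true, zero_pow, zero_mul,
    mul_zero] at hboundary
  exact sub_eq_zero.mp hboundary

lemma integral_pow_mul_sq_sub_pow (m k : ℕ) (a : ℝ) :
    ∫ β in (0 : ℝ)..a, β ^ m * (a ^ 2 - β ^ 2) ^ k =
      a ^ (m + 2 * k + 1) * (k.factorial : ℝ) * Gamma ((m + 1) / 2) /
        (2 * Gamma (k + 1 + (m + 1) / 2)) := by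
  have hm : (0 : ℝ) < (m + 1) / 2 := by positivity
  induction k with
  | zero =>
    simp only [pow_zero, mul_one, integral_pow, Nat.factorial_zero, Nat.cast_one]
    rw [show ((0 : ℕ) : ℝ) + 1 + (m + 1) / 2 = (m + 1) / 2 + 1 by push_cast; ring,
      Gamma_add_one hm.ne', Nat.mul_zero, Nat.add_zero]
    field_simp
    ring
  | succ k ih =>
    have hx : (0 : ℝ) < k + 1 + (m + 1) / 2 := by positivity
    have hrec := integral_pow_mul_sq_sub_pow_succ m k a
    have hden : (m : ℝ) + 2 * k + 3 ≠ 0 := by positivity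
    rw [ih] at hrec
    rw [eq_div_of_mul_eq hden ((mul_comm _ _).trans hrec), Nat.factorial_succ]
    push_cast
    rw [show (k : ℝ) + 1 + 1 + (m + 1) / 2 = (k + 1 + (m + 1) / 2) + 1 by ring,
      Gamma_add_one hx.ne', show m + 2 * (k + 1) + 1 = (m + 2 * k + 1) + 2 by ring, pow_add]
    field_simp [(Gamma_pos_of_pos hx).ne']
    ring

theorem stmt_11_general (k m : ℕ) (c t : ℝ) (h : 0 < c * t) :
    2 * (Nat.factorial (2 * k + 1) : ℝ) / (Nat.factorial k : ℝ) ^ 2 *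
      ∫ β in (0:ℝ)..(c * t),
        β ^ m * (c ^ 2 * t ^ 2 - β ^ 2) ^ k / (2 * c * t) ^ (2 * k + 1) =
      (Nat.factorial (2 * k + 1) : ℝ) * (c * t) ^ m /
          (2 ^ (2 * k + 1) * (Nat.factorial k : ℝ)) *
        (Real.Gamma ((m + 1) / 2) / Real.Gamma (k + 1 + (m + 1) / 2)) := by
  have hΓ : Gamma ((k : ℝ) + 1 + (m + 1) / 2) ≠ 0 := (Gamma_pos_of_pos (by positivity)).ne'
  rw [integral_div, show c ^ 2 * t ^ 2 = (c * t) ^ 2 by ring, integral_pow_mul_sq_sub_pow,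
    show (2 * c * t) ^ (2 * k + 1) = 2 ^ (2 * k + 1) * (c * t) ^ (2 * k + 1) by ring,
    show m + 2 * k + 1 = m + (2 * k + 1) by ring, pow_add]
  field_simp [h.ne', Nat.factorial_ne_zero]

theorem stmt_11 (k m : ℕ) (hm : 1 ≤ m) (c t : ℝ) (h : 0 < c * t) :
    2 * (Nat.factorial (2 * k + 1) : ℝ) / (Nat.factorial k : ℝ) ^ 2 *
      ∫ β in (0:ℝ)..(c * t),
        β ^ m * (c ^ 2 * t ^ 2 - β ^ 2) ^ k / (2 * c * t) ^ (2 * k + 1) =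
      (Nat.factorial (2 * k + 1) : ℝ) * (c * t) ^ m /
          (2 ^ (2 * k + 1) * (Nat.factorial k : ℝ)) *
        (Real.Gamma ((m + 1) / 2) / Real.Gamma (k + 1 + (m + 1) / 2)) :=
  stmt_11_general k m c t h
end

section
/- For all reals λ > 0, c > 0, t > 0 and 0 < β < ct, the identity Σ_{k=0}^∞ 2·((2k+1)!/(k!)²)·((c²t²−β²)^k/(2ct)^{2k+1})·e^{−λt}(λt)^{2k+1}/(2k+1)! = (λ e^{−λt}/c)·I₀((λ/c)√(c²t²−β²)) holds, where I₀(x) = Σ_{j=0}^∞ (x/2)^{2j}/(j!)² is the modified Bessel function of order 0. -/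
/-! The factor `(2k+1)!` cancels against the Poisson weight and the powers of `t` cancel, so the
`k`-th term of the series is exactly `λ e^{-λt} / c` times the `k`-th term of the power series of
`I₀((λ/c)√(c²t² - β²))`; the two `tsum`s agree term by term, so no summability is needed. -/

noncomputable def besselI0 (x : ℝ) : ℝ :=
  ∑' j : ℕ, (x / 2) ^ (2 * j) / (Nat.factorial j : ℝ) ^ 2

lemma besselI0_mul_sqrt (a : ℝ) {x : ℝ} (hx : 0 ≤ x) :
    besselI0 (a * Real.sqrt x) = ∑' j : ℕ, (a / 2) ^ (2 * j) * x ^ j / (Nat.factorial j : ℝ) ^ 2 := by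
  refine tsum_congr fun j => ?_
  rw [mul_div_right_comm, mul_pow, pow_mul (Real.sqrt x), Real.sq_sqrt hx]

lemma telegraph_term_eq (lam c t x : ℝ) (hc : c ≠ 0) (ht : t ≠ 0) (k : ℕ) :
    2 * ((Nat.factorial (2 * k + 1) : ℝ) / (Nat.factorial k : ℝ) ^ 2) *
        (x ^ k / (2 * c * t) ^ (2 * k + 1)) *
        (Real.exp (-(lam * t)) * (lam * t) ^ (2 * k + 1) / (Nat.factorial (2 * k + 1) : ℝ)) =
      lam * Real.exp (-(lam * t)) / c *
        ((lam / c / 2) ^ (2 * k) * x ^ k / (Nat.factorial k : ℝ) ^ 2) := by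
  simp only [div_pow]
  field_simp
  ring

theorem stmt_17_general (lam c t β : ℝ) (hc : 0 < c) (ht : 0 < t)
    (hβ : 0 < β) (hβct : β < c * t) :
    ∑' k : ℕ,
        2 * ((Nat.factorial (2 * k + 1) : ℝ) / (Nat.factorial k : ℝ) ^ 2) *
          ((c ^ 2 * t ^ 2 - β ^ 2) ^ k / (2 * c * t) ^ (2 * k + 1)) *
          (Real.exp (-(lam * t)) * (lam * t) ^ (2 * k + 1) /
            (Nat.factorial (2 * k + 1) : ℝ)) =
      lam * Real.exp (-(lam * t)) / c *
        besselI0 (lam / c * Real.sqrt (c ^ 2 * t ^ 2 - β ^ 2)) := by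
  have hx : 0 ≤ c ^ 2 * t ^ 2 - β ^ 2 := by nlinarith
  rw [besselI0_mul_sqrt _ hx, ← tsum_mul_left]
  exact tsum_congr (telegraph_term_eq lam c t _ hc.ne' ht.ne')

theorem stmt_17 (lam c t β : ℝ) (hlam : 0 < lam) (hc : 0 < c) (ht : 0 < t)
    (hβ : 0 < β) (hβct : β < c * t) :
    ∑' k : ℕ,
        2 * ((Nat.factorial (2 * k + 1) : ℝ) / (Nat.factorial k : ℝ) ^ 2) *
          ((c ^ 2 * t ^ 2 - β ^ 2) ^ k / (2 * c * t) ^ (2 * k + 1)) *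
          (Real.exp (-(lam * t)) * (lam * t) ^ (2 * k + 1) /
            (Nat.factorial (2 * k + 1) : ℝ)) =
      lam * Real.exp (-(lam * t)) / c *
        besselI0 (lam / c * Real.sqrt (c ^ 2 * t ^ 2 - β ^ 2)) :=
  stmt_17_general lam c t β hc ht hβ hβct
end
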